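/- arXiv:2304.05996 — 3 statements merged into one kernel-verified Lean document; each statement's English description precedes it below -/
import Mathlib

section
/- Let g and h be g-functions on the full shift Σ with d(g,h) < ∞. Let k ≥ 0 and let x, y ∈ Σ satisfy x_i = y_i for all 0 ≤ i ≤ k−1 (no condition when k = 0). Then Σ_{i∈S} min(g(ix), h(iy)) ≥ e^{−(V_{k+1}(g) + d(g,h))}; equivalently, Δ(x,y) := 1 − Σ_{i∈S} min(g(ix), h(iy)) satisfies Δ(x,y) ≤ 1 − e^{−(V_{k+1}(g) + d(g,h))}. -/
open MeasureTheory Filter Topology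
open scoped ENNReal NNReal

variable {S : Type} [Countable S] [Infinite S]
  [TopologicalSpace S] [DiscreteTopology S]
  [MeasurableSpace S] [BorelSpace S]

def cons (i : S) (x : ℕ → S) : ℕ → S := fun n => Nat.casesOn n i x

def shift (x : ℕ → S) : ℕ → S := fun n => x (n + 1)

def IsGFunction (g : (ℕ → S) → ℝ) : Prop :=
  Continuous g ∧ (∀ x, g x ∈ Set.Ioc (0:ℝ) 1) ∧ ∀ x, HasSum (fun i : S => g (cons i x)) 1

def IsGMeasure (g : (ℕ → S) → ℝ) (μ : Measure (ℕ → S)) : Prop :=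
  IsProbabilityMeasure μ ∧ μ.map shift = μ ∧
    ∀ f : BoundedContinuousFunction (ℕ → S) ℝ,
      ∫ x, (∑' i : S, g (cons i x) * f (cons i x)) ∂μ = ∫ x, f x ∂μ

def IsJoining (ν₁ ν₂ : Measure (ℕ → S)) (μ : Measure ((ℕ → S) × (ℕ → S))) : Prop :=
  IsProbabilityMeasure μ ∧ μ.map (Prod.map shift shift) = μ ∧
    μ.map Prod.fst = ν₁ ∧ μ.map Prod.snd = ν₂

noncomputable def dbar (ν₁ ν₂ : Measure (ℕ → S)) : ℝ≥0∞ :=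
  ⨅ (μ : Measure ((ℕ → S) × (ℕ → S))) (_ : IsJoining ν₁ ν₂ μ),
    μ {p | p.1 0 ≠ p.2 0}

noncomputable def eVar (g : (ℕ → S) → ℝ) (n : ℕ) : ℝ≥0∞ :=
  ⨆ (x : ℕ → S) (y : ℕ → S) (_ : ∀ i < n, x i = y i),
    edist (Real.log (g x)) (Real.log (g y))

noncomputable def eDist (g h : (ℕ → S) → ℝ) : ℝ≥0∞ :=
  ⨆ x : ℕ → S, edist (Real.log (g x)) (Real.log (h x))

noncomputable def expNeg (v : ℝ≥0∞) : ℝ≥0∞ :=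
  if v = ∞ then 0 else ENNReal.ofReal (Real.exp (-v.toReal))

lemma exp_neg_mul_le {a b : ℝ} (ha : 0 < a) (hb : 0 < b) {V : ℝ≥0∞} (hV : V ≠ ∞)
    (h : edist (Real.log a) (Real.log b) ≤ V) :
    Real.exp (-V.toReal) * b ≤ a := by
  have hd : dist (Real.log a) (Real.log b) ≤ V.toReal := by
    rw [← ENNReal.ofReal_le_iff_le_toReal hV, ← edist_dist]; exact h
  rw [Real.dist_eq] at hd
  have h2 := (abs_le.mp hd).1
  have hlog : Real.log b - V.toReal ≤ Real.log a := by linarith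
  calc Real.exp (-V.toReal) * b = Real.exp (Real.log b - V.toReal) := by
        rw [Real.exp_sub, Real.exp_log hb, Real.exp_neg]; ring
    _ ≤ a := by
        rw [← Real.exp_log ha]; exact Real.exp_le_exp.mpr hlog

/-- **Lemma (lower bound on the coupling mass).**
For g-functions `g, h` on the full shift with `d(g,h) < ∞`, if `x, y` agree in their first `k`
coordinates then `∑_i min(g(ix), h(iy)) ≥ e^{-(V_{k+1}(g) + d(g,h))}`; equivalently
`Δ(x,y) = 1 - ∑_i min(g(ix),h(iy)) ≤ 1 - e^{-(V_{k+1}(g)+d(g,h))}`. -/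
theorem coupling_mass_lower_bound
    (g h : (ℕ → S) → ℝ) (hg : IsGFunction g) (hh : IsGFunction h)
    (hd : eDist g h ≠ ∞)
    (k : ℕ) (x y : ℕ → S) (hagree : ∀ i < k, x i = y i) :
    (expNeg (eVar g (k + 1) + eDist g h)).toReal
        ≤ ∑' i : S, min (g (cons i x)) (h (cons i y)) ∧
    1 - ∑' i : S, min (g (cons i x)) (h (cons i y))
        ≤ 1 - (expNeg (eVar g (k + 1) + eDist g h)).toReal := by
  have hsum_gx : Summable (fun i : S => g (cons i x)) := (hg.2.2 x).summable
  have hsum_gy : Summable (fun i : S => g (cons i y)) := (hg.2.2 y).summable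
  have hmin_nonneg : ∀ i : S, 0 ≤ min (g (cons i x)) (h (cons i y)) := fun i =>
    le_min (hg.2.1 _).1.le (hh.2.1 _).1.le
  have hsum_min : Summable (fun i : S => min (g (cons i x)) (h (cons i y))) :=
    hsum_gx.of_nonneg_of_le hmin_nonneg (fun i => min_le_left _ _)
  have main : (expNeg (eVar g (k + 1) + eDist g h)).toReal
      ≤ ∑' i : S, min (g (cons i x)) (h (cons i y)) := by
    by_cases hfin : eVar g (k + 1) + eDist g h = ∞
    · simp only [expNeg, hfin, if_pos, ENNReal.toReal_zero]
      exact tsum_nonneg hmin_nonneg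
    · obtain ⟨hV, hD⟩ := ENNReal.add_ne_top.mp hfin
      set Vr := (eVar g (k + 1)).toReal with hVr
      set Dr := (eDist g h).toReal with hDr
      have hVr0 : 0 ≤ Vr := ENNReal.toReal_nonneg
      have hDr0 : 0 ≤ Dr := ENNReal.toReal_nonneg
      have key : ∀ i : S,
          Real.exp (-(Vr + Dr)) * g (cons i y) ≤ min (g (cons i x)) (h (cons i y)) := by
        intro i
        have hgx : 0 < g (cons i x) := (hg.2.1 _).1
        have hgy : 0 < g (cons i y) := (hg.2.1 _).1
        have hhy : 0 < h (cons i y) := (hh.2.1 _).1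
        have hagree' : ∀ j < k + 1, cons i x j = cons i y j := by
          intro j hj
          match j with
          | 0 => rfl
          | Nat.succ m => exact hagree m (Nat.succ_lt_succ_iff.mp hj)
        have hVle : edist (Real.log (g (cons i x))) (Real.log (g (cons i y)))
            ≤ eVar g (k + 1) :=
          le_iSup_of_le (cons i x) (le_iSup_of_le (cons i y) (le_iSup_of_le hagree' le_rfl))
        have hDle : edist (Real.log (h (cons i y))) (Real.log (g (cons i y)))
            ≤ eDist g h := by
          rw [edist_comm]; exact le_iSup_of_le (cons i y) le_rfl
        have h1 : Real.exp (-Vr) * g (cons i y) ≤ g (cons i x) :=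
          exp_neg_mul_le hgx hgy hV hVle
        have h2 : Real.exp (-Dr) * g (cons i y) ≤ h (cons i y) :=
          exp_neg_mul_le hhy hgy hD hDle
        have hmono1 : Real.exp (-(Vr + Dr)) ≤ Real.exp (-Vr) :=
          Real.exp_le_exp.mpr (by linarith)
        have hmono2 : Real.exp (-(Vr + Dr)) ≤ Real.exp (-Dr) :=
          Real.exp_le_exp.mpr (by linarith)
        refine le_min ?_ ?_
        · exact le_trans (mul_le_mul_of_nonneg_right hmono1 hgy.le) h1
        · exact le_trans (mul_le_mul_of_nonneg_right hmono2 hgy.le) h2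
      have htsum : ∑' i : S, Real.exp (-(Vr + Dr)) * g (cons i y)
          = Real.exp (-(Vr + Dr)) := by
        rw [tsum_mul_left, (hg.2.2 y).tsum_eq, mul_one]
      have hle : ∑' i : S, Real.exp (-(Vr + Dr)) * g (cons i y)
          ≤ ∑' i : S, min (g (cons i x)) (h (cons i y)) :=
        Summable.tsum_le_tsum key (hsum_gy.mul_left _) hsum_min
      have hexp : (expNeg (eVar g (k + 1) + eDist g h)).toReal = Real.exp (-(Vr + Dr)) := by
        rw [expNeg, if_neg hfin, ENNReal.toReal_ofReal (Real.exp_nonneg _),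
          ENNReal.toReal_add hV hD]
      rw [hexp, ← htsum]; exact hle
  exact ⟨main, by linarith⟩
end

section
/- Let Σ_A be a topologically mixing countable Markov shift, 0 < θ < 1, and let φ : Σ_A → ℝ be locally θ-Hölder, strongly positive recurrent, with P_G(φ) = 0. Fix a state a ∈ S, constants ε_a > 0 and p > 0 with θ e^{p} < 1, set ψ := φ + ε_a − p·1_{[a]} (where [a] = {x : x₀ = a}), and let c := exp(Σ_{k≥2} var_k(φ)). Suppose h₀ : Σ_A → (0,∞) is continuous, satisfies L_ψ h₀ = h₀ pointwise, has h₀[b] := sup_{x∈[b]} h₀(x) < ∞ for every state b, and satisfies h₀(x) ≥ c^{−1} h₀[x₀] for every x. For f : Σ_A → ℝ define ‖f‖_𝓑 := sup_{b∈S} (1/h₀[b]) [ sup_{x∈[b]} |f(x)| + sup_{x≠y∈[b]} |f(x) − f(y)|/θ^{s_a(x,y)} ], where s_a(x,y) = #{ 0 ≤ i ≤ t(x,y) − 1 : x_i = y_i = a } and t(x,y) = min{k : x_k ≠ y_k}. Then for every ε > 0 there exists δ > 0 such that for every locally θ-Hölder strongly positive recurrent potential τ with P_G(τ) = 0 and ‖φ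 − τ‖_θ < δ, one has ‖L_φ f − L_τ f‖_𝓑 ≤ ε for every f with ‖f‖_𝓑 ≤ 1; that is, the operator norm ‖L_φ − L_τ‖ on (𝓑, ‖·‖_𝓑) is at most ε. -/
open MeasureTheory Filter Topology
open scoped ENNReal NNReal

variable {S : Type} [Countable S] [TopologicalSpace S] [DiscreteTopology S]

/-- The countable Markov shift with alphabet `S` and transition matrix `A`. -/
abbrev CMS (A : S → S → Prop) : Type := {x : ℕ → S // ∀ i, A (x i) (x (i + 1))}

variable (A : S → S → Prop)

/-- The left shift map on the countable Markov shift. -/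
def shiftA : CMS A → CMS A := fun x => ⟨fun n => x.1 (n + 1), fun i => x.2 (i + 1)⟩

/-- Topological mixing: for all states `a, b` there is `N` such that for every `n ≥ N` there is
an admissible word of length `n+1` from `a` to `b`. -/
def TopMixing : Prop :=
  ∀ a b : S, ∃ N : ℕ, ∀ n ≥ N, ∃ w : ℕ → S,
    w 0 = a ∧ w n = b ∧ ∀ i < n, A (w i) (w (i + 1))

/-- Birkhoff sums. -/
noncomputable def birk (φ : CMS A → ℝ) (n : ℕ) (x : CMS A) : ℝ :=
  ∑ k ∈ Finset.range n, φ ((shiftA A)^[k] x)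

/-- Gurevich partition function `Z_n(φ,a)`, valued in `ℝ≥0∞`. -/
noncomputable def Zfun (φ : CMS A → ℝ) (a : S) (n : ℕ) : ℝ≥0∞ :=
  ∑' x : {x : CMS A // (shiftA A)^[n] x = x ∧ x.1 0 = a},
    ENNReal.ofReal (Real.exp (birk A φ n x))

/-- Restricted partition function `Z*_n(φ,a)` over first returns, valued in `ℝ≥0∞`. -/
noncomputable def Zstar (φ : CMS A → ℝ) (a : S) (n : ℕ) : ℝ≥0∞ :=
  ∑' x : {x : CMS A // ((shiftA A)^[n] x = x ∧ x.1 0 = a) ∧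
      ∀ i, 1 ≤ i → i ≤ n - 1 → x.1 i ≠ a},
    ENNReal.ofReal (Real.exp (birk A φ n x))

/-- `φ` has Gurevich pressure `P` witnessed at the state `a`:
`Z_n(φ,a)^{1/n} → e^P`, i.e. `(1/n) log Z_n(φ,a) → P`. -/
def HasGurPressure (φ : CMS A → ℝ) (a : S) (P : ℝ) : Prop :=
  Tendsto (fun n : ℕ => Zfun A φ a n ^ (1 / (n : ℝ))) atTop
    (𝓝 (ENNReal.ofReal (Real.exp P)))

/-- Strong positive recurrence at the state `a`, for pressure `P`:
`limsup (1/n) log Z*_n(φ,a) < P`. -/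
noncomputable def SPRat (φ : CMS A → ℝ) (a : S) (P : ℝ) : Prop :=
  Filter.atTop.limsup (fun n : ℕ => Zstar A φ a n ^ (1 / (n : ℝ)))
    < ENNReal.ofReal (Real.exp P)

/-- `φ` is `θ`-weakly Hölder continuous: `var_n(φ) ≤ C θ^n` for all `n ≥ 2`. -/
def WeakHolder (θ : ℝ) (φ : CMS A → ℝ) : Prop :=
  ∃ C > (0:ℝ), ∀ n : ℕ, 2 ≤ n → ∀ x y : CMS A,
    (∀ i < n, x.1 i = y.1 i) → |φ x - φ y| ≤ C * θ ^ n

/-- `φ` is locally `θ`-Hölder continuous: weakly Hölder with `var₁(φ) < ∞`. -/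
def LocHolder (θ : ℝ) (φ : CMS A → ℝ) : Prop :=
  WeakHolder A θ φ ∧ ∃ M : ℝ, ∀ x y : CMS A, x.1 0 = y.1 0 → |φ x - φ y| ≤ M

/-- The set `A_θ` of `θ`-weakly Hölder, strongly positive recurrent potentials with finite
Gurevich pressure. -/
def Atheta (θ : ℝ) : Set (CMS A → ℝ) :=
  {φ | WeakHolder A θ φ ∧ ∃ (a : S) (P : ℝ), HasGurPressure A φ a P ∧ SPRat A φ a P}

/-- First disagreement time `t(x,y)`. -/
noncomputable def sepT (x y : CMS A) : ℕ := sInf {k | x.1 k ≠ y.1 k}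

/-- The Hölder distance `d_θ(φ,τ) = ‖φ-τ‖_∞ + |φ-τ|_θ`, valued in `ℝ≥0∞`. -/
noncomputable def dTheta (θ : ℝ) (φ τ : CMS A → ℝ) : ℝ≥0∞ :=
  (⨆ x : CMS A, edist (φ x) (τ x)) +
    ⨆ (x : CMS A) (y : CMS A) (_ : x ≠ y),
      edist (φ x - τ x) (φ y - τ y) / ENNReal.ofReal (θ ^ sepT A x y)

/-- The `n`-th variation of `φ`, valued in `ℝ≥0∞`. -/
noncomputable def eVarA (φ : CMS A → ℝ) (n : ℕ) : ℝ≥0∞ :=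
  ⨆ (x : CMS A) (y : CMS A) (_ : ∀ i < n, x.1 i = y.1 i), edist (φ x) (φ y)

open scoped Classical in
/-- `s_a(x,y)`: the number of `i < t(x,y)` with `x_i = y_i = a`. -/
noncomputable def sCount (a : S) (x y : CMS A) : ℕ :=
  ((Finset.range (sepT A x y)).filter (fun i => x.1 i = a ∧ y.1 i = a)).card

/-- The norm of the Banach space `𝓑` on which the Ruelle operator of a strongly positive
recurrent potential acts with a spectral gap (valued in `ℝ≥0∞`). -/
noncomputable def Bnorm (θ : ℝ) (a : S) (h₀sup : S → ℝ) (f : CMS A → ℝ) : ℝ≥0∞ :=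
  ⨆ b : S, (ENNReal.ofReal (h₀sup b))⁻¹ *
    ((⨆ (x : CMS A) (_ : x.1 0 = b), ENNReal.ofReal |f x|) +
      ⨆ (x : CMS A) (y : CMS A) (_ : x.1 0 = b) (_ : y.1 0 = b) (_ : x ≠ y),
        edist (f x) (f y) / ENNReal.ofReal (θ ^ sCount A a x y))

/-- The Ruelle operator `L_φ` (pointwise, via `tsum`). -/
noncomputable def Lop (φ : CMS A → ℝ) (f : CMS A → ℝ) : CMS A → ℝ :=
  fun x => ∑' y : {y : CMS A // shiftA A y = x}, Real.exp (φ y.1) * f y.1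

/-!
Write `ψ = φ + ε_a − p·1_[a]` and `H b = h₀[b]`. Since `H x₀ ≤ c h₀(x)` and `φ ≤ ψ + p`,
`e^{φ(w)} H(w₀) ≤ c e^p e^{ψ(w)} h₀(w)`, so the eigen-equation `L_ψ h₀ = h₀` shows that `L_φ`
maps the cylinder function `x ↦ H x₀` below `M = c e^p` times itself. Everything else is a
pointwise estimate under the Ruelle sums. If `‖φ − τ‖_θ < δ ≤ 1`, then `|e^φ − e^τ| ≤ e δ e^φ`,
which with `|f| ≤ H` bounds the sup part of `‖L_φ f − L_τ f‖_𝓑` by `e δ M`. For the Hölder part,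
the preimages of two points `x, y` of one cylinder are paired by their first symbol; along such a
pair `(w, w')` the second difference of `e^φ − e^τ` is `O(δ θ^{t(w,w')})` because both `φ` and
`φ − τ` are `θ`-Hölder, and `t(w,w') ≥ s_a(w,w') ≥ s_a(x,y)`.
-/

open Real

lemma abs_exp_sub_one_le_mul_exp_abs (t : ℝ) : |exp t - 1| ≤ |t| * exp |t| := by
  rcases le_total 0 t with ht | ht
  · rw [abs_of_nonneg ht, abs_of_nonneg (sub_nonneg.2 (one_le_exp ht))]
    have hinv : exp (-t) * exp t = 1 := by rw [← exp_add]; simp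
    nlinarith [add_one_le_exp (-t), exp_pos t]
  · rw [abs_of_nonpos (sub_nonpos.2 (exp_le_one_iff.2 ht)), abs_of_nonpos ht]
    nlinarith [add_one_le_exp t, mul_le_mul_of_nonneg_left (one_le_exp (neg_nonneg.2 ht))
      (neg_nonneg.2 ht)]

lemma abs_exp_sub_exp_le (u v : ℝ) : |exp u - exp v| ≤ exp u * (|u - v| * exp |u - v|) := by
  have hfac : exp u - exp v = -(exp u * (exp (v - u) - 1)) := by
    rw [mul_sub, mul_one, ← exp_add]; ring_nf
  rw [hfac, abs_neg, abs_mul, abs_of_pos (exp_pos u), abs_sub_comm u v]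
  exact mul_le_mul_of_nonneg_left (abs_exp_sub_one_le_mul_exp_abs _) (exp_pos u).le

lemma abs_exp_sub_exp_le_of_abs_sub_le {u v δ : ℝ} (h : |u - v| ≤ δ) (hδ : δ ≤ 1) :
    |exp u - exp v| ≤ exp 1 * δ * exp u := by
  have hδ0 : 0 ≤ δ := (abs_nonneg _).trans h
  have hexp : exp |u - v| ≤ exp 1 := exp_le_exp.2 (h.trans hδ)
  calc |exp u - exp v| ≤ exp u * (|u - v| * exp |u - v|) := abs_exp_sub_exp_le u v
    _ ≤ exp u * (δ * exp 1) := by gcongr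
    _ = exp 1 * δ * exp u := by ring

lemma abs_exp_sub_exp_sub_sub_le {P Q P' Q' C δ r : ℝ} (hC : 0 ≤ C) (hδ : δ ≤ 1)
    (hr0 : 0 ≤ r) (hr1 : r ≤ 1) (hPQ : |P - Q| ≤ δ) (hPP' : |P - P'| ≤ C * r)
    (hPQPQ : |(P - Q) - (P' - Q')| ≤ δ * r) :
    |(exp P - exp Q) - (exp P' - exp Q')| ≤ exp 1 * (C * exp C + exp 1) * δ * r * exp P' := by
  have hδ0 : 0 ≤ δ := (abs_nonneg _).trans hPQ
  have hP'P : |P' - P| ≤ C * r := abs_sub_comm P P' ▸ hPP'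
  have h₁ : |exp P' - exp P| ≤ C * exp C * r * exp P' := by
    have hexp : exp |P' - P| ≤ exp C := exp_le_exp.2 (hP'P.trans (mul_le_of_le_one_right hC hr1))
    calc |exp P' - exp P| ≤ exp P' * (|P' - P| * exp |P' - P|) := abs_exp_sub_exp_le P' P
      _ ≤ exp P' * (C * r * exp C) := by gcongr
      _ = C * exp C * r * exp P' := by ring
  have h₂ : |1 - exp (Q - P)| ≤ exp 1 * δ := by
    simpa using abs_exp_sub_exp_le_of_abs_sub_le (u := 0) (v := Q - P)
      (by rwa [zero_sub, abs_neg, abs_sub_comm]) hδ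
  have h₃ : |exp (Q - P) - exp (Q' - P')| ≤ exp 1 * (δ * r) * exp (Q - P) :=
    abs_exp_sub_exp_le_of_abs_sub_le (by rw [← abs_neg]; convert hPQPQ using 2; ring)
      (mul_le_one₀ hδ hr0 hr1)
  have hQP : exp (Q - P) ≤ exp 1 :=
    exp_le_exp.2 ((le_abs_self _).trans ((abs_sub_comm Q P ▸ hPQ).trans hδ))
  have hsplit : (exp P - exp Q) - (exp P' - exp Q') =
      (exp P - exp P') * (1 - exp (Q - P)) + exp P' * (exp (Q' - P') - exp (Q - P)) := by
    rw [exp_sub, exp_sub]; field_simp; ring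
  rw [hsplit]
  calc _ ≤ |exp P - exp P'| * |1 - exp (Q - P)| + exp P' * |exp (Q' - P') - exp (Q - P)| := by
        refine (abs_add_le _ _).trans_eq ?_
        rw [abs_mul, abs_mul, abs_of_pos (exp_pos P')]
    _ ≤ C * exp C * r * exp P' * (exp 1 * δ) + exp P' * (exp 1 * (δ * r) * exp 1) := by
        rw [abs_sub_comm (exp P), abs_sub_comm (exp (Q' - P'))]
        have h₃' : |exp (Q - P) - exp (Q' - P')| ≤ exp 1 * (δ * r) * exp 1 :=
          h₃.trans (by gcongr)
        gcongr
    _ = exp 1 * (C * exp C + exp 1) * δ * r * exp P' := by ring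

lemma abs_exp_sub_exp_mul_sub_le {P Q P' Q' F F' C δ r r' H : ℝ} (hC : 0 ≤ C) (hδ : δ ≤ 1)
    (hr0 : 0 ≤ r) (hr1 : r ≤ 1) (hPQ : |P - Q| ≤ δ) (hPP' : |P - P'| ≤ C * r)
    (hPQPQ : |(P - Q) - (P' - Q')| ≤ δ * r) (hrr' : r ≤ r') (hFF' : |F - F'| ≤ H * r')
    (hF' : |F'| ≤ H) :
    |(exp P - exp Q) * F - (exp P' - exp Q') * F'| ≤
      exp 1 * (C * exp C + exp 1) * δ * r' * H * (exp P + exp P') := by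
  have hδ0 : 0 ≤ δ := (abs_nonneg _).trans hPQ
  have hH : 0 ≤ H := (abs_nonneg _).trans hF'
  have hκ : exp 1 ≤ exp 1 * (C * exp C + exp 1) :=
    le_mul_of_one_le_right (exp_pos 1).le (by nlinarith [one_le_exp zero_le_one, exp_pos C])
  have hsplit : (exp P - exp Q) * F - (exp P' - exp Q') * F' =
      (exp P - exp Q) * (F - F') + ((exp P - exp Q) - (exp P' - exp Q')) * F' := by ring
  rw [hsplit]
  calc _ ≤ |exp P - exp Q| * |F - F'| + |(exp P - exp Q) - (exp P' - exp Q')| * |F'| := by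
        refine (abs_add_le _ _).trans_eq ?_
        rw [abs_mul, abs_mul]
    _ ≤ exp 1 * δ * exp P * (H * r') +
        exp 1 * (C * exp C + exp 1) * δ * r * exp P' * H := by
        gcongr
        · exact abs_exp_sub_exp_le_of_abs_sub_le hPQ hδ
        · exact abs_exp_sub_exp_sub_sub_le hC hδ hr0 hr1 hPQ hPP' hPQPQ
    _ = exp 1 * (δ * r' * H * exp P) + exp 1 * (C * exp C + exp 1) * δ * r * exp P' * H := by
        ring
    _ ≤ exp 1 * (C * exp C + exp 1) * (δ * r' * H * exp P) +
        exp 1 * (C * exp C + exp 1) * δ * r' * exp P' * H := by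
        have hr' : 0 ≤ r' := hr0.trans hrr'
        gcongr
    _ = exp 1 * (C * exp C + exp 1) * δ * r' * H * (exp P + exp P') := by ring

lemma pos_of_isLUB {T : Set ℝ} {s : ℝ} (hs : IsLUB T s) (hT : ∀ r ∈ T, 0 < r) : 0 < s :=
  let ⟨r, hr⟩ := hs.nonempty
  (hT r hr).trans_le (hs.1 hr)

section Shift

variable {S : Type} {A : S → S → Prop}

def consA (z : S) (x : CMS A) (h : A z (x.1 0)) : CMS A :=
  ⟨fun n => Nat.casesOn n z x.1, fun i => by cases i with
    | zero => exact h
    | succ m => exact x.2 m⟩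

@[simp] lemma shiftA_consA (z : S) (x : CMS A) (h : A z (x.1 0)) :
    shiftA A (consA z x h) = x := rfl

lemma adj_of_shiftA_eq {w x : CMS A} (hw : shiftA A w = x) : A (w.1 0) (x.1 0) :=
  hw ▸ w.2 0

lemma consA_of_shiftA_eq {w x : CMS A} (hw : shiftA A w = x) :
    consA (w.1 0) x (adj_of_shiftA_eq hw) = w := by
  subst hw
  apply Subtype.ext
  funext n
  cases n <;> rfl

/-- Pairs the preimages of `x` and `y` having the same first symbol. -/
def preimageEquiv {x y : CMS A} (h : x.1 0 = y.1 0) :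
    {w : CMS A // shiftA A w = x} ≃ {w : CMS A // shiftA A w = y} where
  toFun w := ⟨consA (w.1.1 0) y (h ▸ adj_of_shiftA_eq w.2), shiftA_consA ..⟩
  invFun w := ⟨consA (w.1.1 0) x (h ▸ adj_of_shiftA_eq w.2), shiftA_consA ..⟩
  left_inv w := Subtype.ext (consA_of_shiftA_eq w.2)
  right_inv w := Subtype.ext (consA_of_shiftA_eq w.2)

@[simp] lemma preimageEquiv_apply_zero {x y : CMS A} (h : x.1 0 = y.1 0)
    (w : {w : CMS A // shiftA A w = x}) : (preimageEquiv h w).1.1 0 = w.1.1 0 := rfl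

lemma exists_val_ne_of_ne {x y : CMS A} (h : x ≠ y) : ∃ k, x.1 k ≠ y.1 k := by
  by_contra! hc
  exact h (Subtype.ext (funext hc))

lemma val_sepT_ne {x y : CMS A} (h : x ≠ y) : x.1 (sepT A x y) ≠ y.1 (sepT A x y) :=
  Nat.sInf_mem (exists_val_ne_of_ne h)

lemma val_eq_of_lt_sepT {x y : CMS A} {i : ℕ} (h : i < sepT A x y) : x.1 i = y.1 i :=
  not_not.1 (Nat.notMem_of_lt_sInf h)

lemma one_le_sepT {x y : CMS A} (h0 : x.1 0 = y.1 0) (hne : x ≠ y) : 1 ≤ sepT A x y := by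
  by_contra! ht
  have hsep := val_sepT_ne hne
  rw [Nat.lt_one_iff.1 ht] at hsep
  exact hsep h0

lemma sepT_eq_sepT_shiftA_add_one {w w' : CMS A} (h0 : w.1 0 = w'.1 0)
    (hne : shiftA A w ≠ shiftA A w') : sepT A w w' = sepT A (shiftA A w) (shiftA A w') + 1 := by
  refine le_antisymm (Nat.sInf_le (val_sepT_ne hne)) ?_
  refine le_csInf (exists_val_ne_of_ne fun h => hne (h ▸ rfl)) fun k hk => ?_
  cases k with
  | zero => exact absurd h0 hk
  | succ m => exact Nat.succ_le_succ (Nat.sInf_le hk)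

lemma sCount_le_sepT (a : S) (x y : CMS A) : sCount A a x y ≤ sepT A x y := by
  classical
  exact (Finset.card_filter_le _ _).trans_eq (Finset.card_range _)

lemma sCount_shiftA_le (a : S) {w w' : CMS A} (h0 : w.1 0 = w'.1 0)
    (hne : shiftA A w ≠ shiftA A w') :
    sCount A a (shiftA A w) (shiftA A w') ≤ sCount A a w w' := by
  classical
  unfold sCount
  rw [sepT_eq_sepT_shiftA_add_one h0 hne]
  refine Finset.card_le_card_of_injOn (· + 1) (fun i hi => ?_)
    fun i _ j _ hij => by simpa using hij
  simp only [Finset.coe_filter, Finset.mem_range, Set.mem_ofPred_eq] at hi ⊢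
  exact ⟨by omega, hi.2⟩

end Shift

section Norms

variable {S : Type} {A : S → S → Prop}

lemma edist_div_ofReal_le_ofReal_iff {u v r B : ℝ} (hr : 0 < r) (hB : 0 ≤ B) :
    edist u v / ENNReal.ofReal r ≤ ENNReal.ofReal B ↔ |u - v| ≤ B * r := by
  rw [ENNReal.div_le_iff_le_mul (Or.inl (ENNReal.ofReal_pos.2 hr).ne')
    (Or.inl ENNReal.ofReal_ne_top), ← ENNReal.ofReal_mul hB, edist_dist, Real.dist_eq,
    ENNReal.ofReal_le_ofReal_iff (mul_nonneg hB hr.le)]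

lemma abs_sub_le_of_dTheta_lt {θ δ : ℝ} {φ τ : CMS A → ℝ}
    (hd : dTheta A θ φ τ < ENNReal.ofReal δ) (w : CMS A) : |φ w - τ w| ≤ δ := by
  have hδ : 0 < δ := ENNReal.ofReal_pos.1 (zero_le.trans_lt hd)
  have hle : edist (φ w) (τ w) ≤ ENNReal.ofReal δ :=
    ((le_iSup (fun x => edist (φ x) (τ x)) w).trans le_self_add).trans hd.le
  rwa [edist_dist, Real.dist_eq, ENNReal.ofReal_le_ofReal_iff hδ.le] at hle

lemma abs_sub_sub_le_of_dTheta_lt {θ δ : ℝ} (hθ : 0 < θ) {φ τ : CMS A → ℝ}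
    (hd : dTheta A θ φ τ < ENNReal.ofReal δ) {x y : CMS A} (hne : x ≠ y) :
    |(φ x - τ x) - (φ y - τ y)| ≤ δ * θ ^ sepT A x y := by
  have hδ : 0 < δ := ENNReal.ofReal_pos.1 (zero_le.trans_lt hd)
  rw [← edist_div_ofReal_le_ofReal_iff (pow_pos hθ _) hδ.le]
  refine le_trans ?_ (le_add_self.trans hd.le)
  exact le_iSup₂_of_le x y (le_iSup_of_le hne le_rfl)

variable {θ : ℝ} {a : S} {H : S → ℝ} {f : CMS A → ℝ}

lemma abs_le_of_Bnorm_le_one (hH : ∀ b, 0 < H b) (hf : Bnorm A θ a H f ≤ 1) (x : CMS A) :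
    |f x| ≤ H (x.1 0) := by
  have hb := iSup_le_iff.1 hf (x.1 0)
  rw [ENNReal.inv_mul_le_iff (ENNReal.ofReal_pos.2 (hH _)).ne' ENNReal.ofReal_ne_top,
    mul_one] at hb
  rw [← ENNReal.ofReal_le_ofReal_iff (hH _).le]
  refine le_trans ?_ (le_self_add.trans hb)
  exact le_iSup₂_of_le x rfl le_rfl

lemma abs_sub_le_of_Bnorm_le_one (hθ : 0 < θ) (hH : ∀ b, 0 < H b) (hf : Bnorm A θ a H f ≤ 1)
    {x y : CMS A} (hxy : x.1 0 = y.1 0) (hne : x ≠ y) :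
    |f x - f y| ≤ H (x.1 0) * θ ^ sCount A a x y := by
  have hb := iSup_le_iff.1 hf (x.1 0)
  rw [ENNReal.inv_mul_le_iff (ENNReal.ofReal_pos.2 (hH _)).ne' ENNReal.ofReal_ne_top,
    mul_one] at hb
  rw [← edist_div_ofReal_le_ofReal_iff (pow_pos hθ _) (hH _).le]
  refine le_trans ?_ (le_add_self.trans hb)
  exact le_iSup₂_of_le x y (le_iSup₂_of_le rfl hxy.symm (le_iSup_of_le hne le_rfl))

lemma Bnorm_le_ofReal {α β : ℝ} (hθ : 0 < θ) (hα : 0 ≤ α) (hβ : 0 ≤ β) (hH : ∀ b, 0 < H b)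
    (hsup : ∀ x, |f x| ≤ α * H (x.1 0))
    (hlip : ∀ x y : CMS A, x.1 0 = y.1 0 → x ≠ y →
      |f x - f y| ≤ β * H (x.1 0) * θ ^ sCount A a x y) :
    Bnorm A θ a H f ≤ ENNReal.ofReal (α + β) := by
  refine iSup_le fun b => ?_
  rw [ENNReal.inv_mul_le_iff (ENNReal.ofReal_pos.2 (hH b)).ne' ENNReal.ofReal_ne_top,
    ← ENNReal.ofReal_mul (hH b).le, mul_add,
    ENNReal.ofReal_add (mul_nonneg (hH b).le hα) (mul_nonneg (hH b).le hβ)]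
  refine add_le_add (iSup₂_le fun x hx => ?_)
    (iSup₂_le fun x y => iSup_le fun hx => iSup_le fun hy => iSup_le fun hne => ?_)
  · subst hx
    exact ENNReal.ofReal_le_ofReal ((hsup x).trans_eq (mul_comm _ _))
  · subst hx
    rw [edist_div_ofReal_le_ofReal_iff (pow_pos hθ _) (mul_nonneg (hH _).le hβ), mul_comm (H _)]
    exact hlip x y hy.symm hne

end Norms

section Ruelle

variable {S : Type} {A : S → S → Prop}

def LopDominated (φ : CMS A → ℝ) (H : S → ℝ) (M : ℝ) : Prop :=
  ∀ x : CMS A,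
    Summable (fun w : {w : CMS A // shiftA A w = x} => exp (φ w.1) * H (w.1.1 0)) ∧
      Lop A φ (fun w => H (w.1 0)) x ≤ M * H (x.1 0)

lemma lopDominated_of_hasSum_eigen {φ h₀ : CMS A → ℝ} {H : S → ℝ} {a : S} {εa p c : ℝ}
    (hεa : 0 ≤ εa) (hp : 0 ≤ p) (hc : 0 < c) (hH : ∀ b, 0 ≤ H b)
    (h₀eig : ∀ x : CMS A, HasSum
      (fun y : {y : CMS A // shiftA A y = x} =>
        exp (φ y.1 + εa - ({x : CMS A | x.1 0 = a}.indicator (fun _ => p) y.1)) * h₀ y.1) (h₀ x))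
    (hle : ∀ x, h₀ x ≤ H (x.1 0)) (hlow : ∀ x, c⁻¹ * H (x.1 0) ≤ h₀ x) :
    LopDominated φ H (c * exp p) := by
  intro x
  have hterm : ∀ w : {w : CMS A // shiftA A w = x}, exp (φ w.1) * H (w.1.1 0) ≤
      c * exp p * (exp (φ w.1 + εa - ({x : CMS A | x.1 0 = a}.indicator (fun _ => p) w.1)) *
        h₀ w.1) := by
    rintro ⟨w, -⟩
    have hind : {x : CMS A | x.1 0 = a}.indicator (fun _ => p) w ≤ p := by
      by_cases hw : w.1 0 = a <;> simp [Set.indicator, hw, hp]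
    have hexp : exp (φ w) ≤ exp p *
        exp (φ w + εa - ({x : CMS A | x.1 0 = a}.indicator (fun _ => p) w)) := by
      rw [← exp_add]
      exact exp_le_exp.2 (by linarith)
    have hHc : H (w.1 0) ≤ c * h₀ w := by rw [← inv_mul_le_iff₀ hc]; exact hlow w
    calc exp (φ w) * H (w.1 0) ≤ _ * (c * h₀ w) := mul_le_mul hexp hHc (hH _) (by positivity)
      _ = _ := by ring
  have hsum := (h₀eig x).mul_left (c * exp p)
  have hsummable :
      Summable (fun w : {w : CMS A // shiftA A w = x} => exp (φ w.1) * H (w.1.1 0)) :=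
    hsum.summable.of_nonneg_of_le (fun w => mul_nonneg (exp_pos _).le (hH _)) hterm
  have hLop : Lop A φ (fun w => H (w.1 0)) x ≤ c * exp p * h₀ x :=
    hasSum_le hterm hsummable.hasSum hsum
  exact ⟨hsummable, hLop.trans (mul_le_mul_of_nonneg_left (hle x) (by positivity))⟩

variable {φ τ f : CMS A → ℝ} {H : S → ℝ} {M δ : ℝ}

lemma summable_exp_mul_of_lopDominated (hdom : LopDominated φ H M) {ρ : CMS A → ℝ}
    (hρ : ∀ w, |φ w - ρ w| ≤ 1) (hf : ∀ w, |f w| ≤ H (w.1 0)) (x : CMS A) :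
    Summable (fun w : {w : CMS A // shiftA A w = x} => exp (ρ w.1) * f w.1) := by
  refine ((hdom x).1.mul_left (exp 1)).of_norm_bounded fun w => ?_
  have hexp : exp (ρ w.1) ≤ exp 1 * exp (φ w.1) := by
    rw [← exp_add]
    exact exp_le_exp.2 (by linarith [(abs_le.1 (hρ w.1)).1])
  rw [Real.norm_eq_abs, abs_mul, abs_of_pos (exp_pos _), ← mul_assoc]
  exact mul_le_mul hexp (hf _) (abs_nonneg _) (by positivity)

lemma Lop_sub_Lop_eq_tsum (hdom : LopDominated φ H M) (hτ : ∀ w, |φ w - τ w| ≤ 1)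
    (hf : ∀ w, |f w| ≤ H (w.1 0)) (x : CMS A) :
    Lop A φ f x - Lop A τ f x =
      ∑' w : {w : CMS A // shiftA A w = x}, (exp (φ w.1) - exp (τ w.1)) * f w.1 := by
  simp only [Lop, sub_mul]
  exact ((summable_exp_mul_of_lopDominated hdom (by simp) hf x).tsum_sub
    (summable_exp_mul_of_lopDominated hdom hτ hf x)).symm

lemma abs_Lop_sub_Lop_le (hdom : LopDominated φ H M) (hδ : δ ≤ 1) (hτ : ∀ w, |φ w - τ w| ≤ δ)
    (hf : ∀ w, |f w| ≤ H (w.1 0)) (x : CMS A) :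
    |Lop A φ f x - Lop A τ f x| ≤ exp 1 * δ * M * H (x.1 0) := by
  have hδ0 : 0 ≤ δ := (abs_nonneg _).trans (hτ x)
  rw [Lop_sub_Lop_eq_tsum hdom (fun w => (hτ w).trans hδ) hf, ← Real.norm_eq_abs]
  refine (tsum_of_norm_bounded ((hdom x).1.hasSum.mul_left (exp 1 * δ)) fun w => ?_).trans ?_
  · rw [Real.norm_eq_abs, abs_mul, ← mul_assoc]
    exact mul_le_mul (abs_exp_sub_exp_le_of_abs_sub_le (hτ _) hδ) (hf _) (abs_nonneg _)
      (by positivity)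
  · rw [mul_assoc _ M]
    exact mul_le_mul_of_nonneg_left (hdom x).2 (by positivity)

variable {θ C : ℝ} {a : S}

lemma abs_exp_sub_exp_mul_sub_le_of_shiftA_ne (hθ0 : 0 ≤ θ) (hθ1 : θ ≤ 1) (hC : 0 ≤ C)
    (hφ : ∀ n, 2 ≤ n → ∀ x y : CMS A, (∀ i < n, x.1 i = y.1 i) →
      |φ x - φ y| ≤ C * θ ^ n)
    (hδ : δ ≤ 1) (hτ : ∀ w, |φ w - τ w| ≤ δ)
    (hτsep : ∀ x y : CMS A, x ≠ y → |(φ x - τ x) - (φ y - τ y)| ≤ δ * θ ^ sepT A x y)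
    (hf : ∀ w, |f w| ≤ H (w.1 0))
    (hflip : ∀ x y : CMS A, x.1 0 = y.1 0 → x ≠ y →
      |f x - f y| ≤ H (x.1 0) * θ ^ sCount A a x y)
    {w w' : CMS A} (h0 : w.1 0 = w'.1 0) (h1 : (shiftA A w).1 0 = (shiftA A w').1 0)
    (hne : shiftA A w ≠ shiftA A w') :
    |(exp (φ w) - exp (τ w)) * f w - (exp (φ w') - exp (τ w')) * f w'| ≤
      exp 1 * (C * exp C + exp 1) * δ * θ ^ sCount A a (shiftA A w) (shiftA A w') * H (w.1 0) *
        (exp (φ w) + exp (φ w')) := by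
  have hww' : w ≠ w' := fun h => hne (h ▸ rfl)
  have hsep : 2 ≤ sepT A w w' := by
    have := one_le_sepT h1 hne
    rw [sepT_eq_sepT_shiftA_add_one h0 hne]
    omega
  have hcount := sCount_shiftA_le a h0 hne
  have hH : 0 ≤ H (w.1 0) := (abs_nonneg _).trans (hf w)
  refine abs_exp_sub_exp_mul_sub_le hC hδ (pow_nonneg hθ0 _) (pow_le_one₀ hθ0 hθ1) (hτ w)
    (hφ _ hsep w w' fun i hi => val_eq_of_lt_sepT hi) (hτsep w w' hww')
    (pow_le_pow_of_le_one hθ0 hθ1 (hcount.trans (sCount_le_sepT a w w')))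
    ((hflip w w' h0 hww').trans (mul_le_mul_of_nonneg_left
      (pow_le_pow_of_le_one hθ0 hθ1 hcount) hH)) (h0 ▸ hf w')

lemma abs_Lop_sub_Lop_sub_sub_le (hdom : LopDominated φ H M) (hθ0 : 0 ≤ θ) (hθ1 : θ ≤ 1)
    (hC : 0 ≤ C)
    (hφ : ∀ n, 2 ≤ n → ∀ x y : CMS A, (∀ i < n, x.1 i = y.1 i) →
      |φ x - φ y| ≤ C * θ ^ n)
    (hδ : δ ≤ 1) (hτ : ∀ w, |φ w - τ w| ≤ δ)
    (hτsep : ∀ x y : CMS A, x ≠ y → |(φ x - τ x) - (φ y - τ y)| ≤ δ * θ ^ sepT A x y)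
    (hf : ∀ w, |f w| ≤ H (w.1 0))
    (hflip : ∀ x y : CMS A, x.1 0 = y.1 0 → x ≠ y →
      |f x - f y| ≤ H (x.1 0) * θ ^ sCount A a x y)
    {x y : CMS A} (hxy : x.1 0 = y.1 0) (hne : x ≠ y) :
    |(Lop A φ f x - Lop A τ f x) - (Lop A φ f y - Lop A τ f y)| ≤
      2 * (exp 1 * (C * exp C + exp 1)) * δ * M * H (x.1 0) * θ ^ sCount A a x y := by
  set e := preimageEquiv hxy
  set κ := exp 1 * (C * exp C + exp 1)
  have hδ0 : 0 ≤ δ := (abs_nonneg _).trans (hτ x)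
  have hτ1 : ∀ w, |φ w - τ w| ≤ 1 := fun w => (hτ w).trans hδ
  have hD : ∀ z : CMS A, Summable fun w : {w : CMS A // shiftA A w = z} =>
      (exp (φ w.1) - exp (τ w.1)) * f w.1 := fun z => by
    simpa only [sub_mul] using (summable_exp_mul_of_lopDominated hdom (by simp) hf z).sub
      (summable_exp_mul_of_lopDominated hdom hτ1 hf z)
  have hDe : Summable fun w : {w : CMS A // shiftA A w = x} =>
      (exp (φ (e w).1) - exp (τ (e w).1)) * f (e w).1 := e.summable_iff.2 (hD y)
  have hWe : Summable fun w : {w : CMS A // shiftA A w = x} =>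
      exp (φ (e w).1) * H ((e w).1.1 0) := e.summable_iff.2 (hdom y).1
  rw [Lop_sub_Lop_eq_tsum hdom hτ1 hf x, Lop_sub_Lop_eq_tsum hdom hτ1 hf y, ← e.tsum_eq,
    ← (hD x).tsum_sub hDe, ← Real.norm_eq_abs]
  have hW := ((hdom x).1.hasSum.add hWe.hasSum).mul_left (κ * δ * θ ^ sCount A a x y)
  refine (tsum_of_norm_bounded hW fun w => ?_).trans ?_
  · have hpair := abs_exp_sub_exp_mul_sub_le_of_shiftA_ne hθ0 hθ1 hC hφ hδ hτ hτsep hf hflip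
      (w := w.1) (w' := (e w).1) rfl (by rw [w.2, (e w).2]; exact hxy)
      (by rw [w.2, (e w).2]; exact hne)
    rw [w.2, (e w).2] at hpair
    rw [Real.norm_eq_abs, preimageEquiv_apply_zero]
    exact hpair.trans_eq (by ring)
  · rw [e.tsum_eq (fun w => exp (φ w.1) * H (w.1.1 0))]
    have hy := (hdom y).2
    rw [← hxy] at hy
    have : 0 ≤ κ * δ * θ ^ sCount A a x y := by positivity
    calc κ * δ * θ ^ sCount A a x y *
          (Lop A φ (fun w => H (w.1 0)) x + Lop A φ (fun w => H (w.1 0)) y)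
        ≤ κ * δ * θ ^ sCount A a x y * (M * H (x.1 0) + M * H (x.1 0)) := by
          gcongr
          exact (hdom x).2
      _ = _ := by ring

end Ruelle

theorem ruelle_operator_continuity
    (θ : ℝ) (hθ : θ ∈ Set.Ioo (0:ℝ) 1)
    (φ : CMS A → ℝ) (hloc : LocHolder A θ φ)
    (a : S) (εa p : ℝ) (hεa : 0 < εa) (hp : 0 < p)
    (h₀ : CMS A → ℝ) (h₀pos : ∀ x, 0 < h₀ x)
    (h₀eig : ∀ x : CMS A, HasSum
      (fun y : {y : CMS A // shiftA A y = x} =>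
        Real.exp (φ y.1 + εa - ({x : CMS A | x.1 0 = a}.indicator (fun _ => p) y.1)) * h₀ y.1) (h₀ x))
    (h₀sup : S → ℝ)
    (hsup : ∀ b : S, IsLUB {r : ℝ | ∃ x : CMS A, x.1 0 = b ∧ h₀ x = r} (h₀sup b))
    (hlow : ∀ x : CMS A,
      (Real.exp ((∑' k : ℕ, eVarA A φ (k + 2)).toReal))⁻¹ * h₀sup (x.1 0) ≤ h₀ x) :
    ∀ ε > (0:ℝ), ∃ δ > (0:ℝ), ∀ τ : CMS A → ℝ,
      LocHolder A θ τ →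
      (∃ a' : S, HasGurPressure A τ a' 0) →
      (∃ a' : S, SPRat A τ a' 0) →
      dTheta A θ φ τ < ENNReal.ofReal δ →
      ∀ f : CMS A → ℝ, Bnorm A θ a h₀sup f ≤ 1 →
        Bnorm A θ a h₀sup (fun x => Lop A φ f x - Lop A τ f x) ≤ ENNReal.ofReal ε := by
  obtain ⟨⟨C, hC, hφ⟩, -⟩ := hloc
  obtain ⟨hθ0, hθ1⟩ := hθ
  set M := exp (∑' k : ℕ, eVarA A φ (k + 2)).toReal * exp p
  set κ := exp 1 * (C * exp C + exp 1)
  have hH : ∀ b, 0 < h₀sup b := fun b => pos_of_isLUB (hsup b) fun _ ⟨x, _, hx⟩ => hx ▸ h₀pos x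
  have hdom : LopDominated φ h₀sup M := lopDominated_of_hasSum_eigen hεa.le hp.le (exp_pos _)
    (fun b => (hH b).le) h₀eig (fun x => (hsup _).1 ⟨x, rfl, rfl⟩) hlow
  have hK : 0 < (exp 1 + 2 * κ) * M := by positivity
  intro ε hε
  refine ⟨min 1 (ε / ((exp 1 + 2 * κ) * M)), by positivity, fun τ _ _ _ hd f hf => ?_⟩
  set δ := min 1 (ε / ((exp 1 + 2 * κ) * M))
  have hδ0 : 0 < δ := by positivity
  have hδε : (exp 1 + 2 * κ) * M * δ ≤ ε := (le_div_iff₀' hK).1 (min_le_right _ _)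
  have hτ := abs_sub_le_of_dTheta_lt hd
  have hfs := abs_le_of_Bnorm_le_one hH hf
  refine (Bnorm_le_ofReal hθ0 (α := exp 1 * δ * M) (β := 2 * κ * δ * M) (by positivity)
    (by positivity) hH (fun x => ?_) fun x y hxy hne => ?_).trans (ENNReal.ofReal_le_ofReal ?_)
  · exact (abs_Lop_sub_Lop_le hdom (min_le_left _ _) hτ hfs x).trans_eq (by ring)
  · exact abs_Lop_sub_Lop_sub_sub_le hdom hθ0.le hθ1.le hC.le hφ (min_le_left _ _) hτ
      (fun _ _ => abs_sub_sub_le_of_dTheta_lt hθ0 hd) hfs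
      (fun _ _ => abs_sub_le_of_Bnorm_le_one hθ0 hH hf) hxy hne
  · linarith
end

section
/- Let g and h be g-functions on the full shift Σ. For i ∈ S and x, y ∈ Σ set F(i,x,y) = min(g(ix), h(iy)), Δ(x,y) = 1 − Σ_{i∈S} F(i,x,y), and define G(ix,iy) = F(i,x,y), and for i ≠ j, G(ix,jy) = (g(ix) − F(i,x,y))⁺ (h(jy) − F(j,x,y))⁺ / Δ(x,y) when Δ(x,y) > 0 and G(ix,jy) = 0 when Δ(x,y) = 0. Define the Markov operator T on Borel probability measures on Σ×Σ by (Tm)(B) = ∫ Σ_{i,j∈S} G(ix,jy) 1_B(ix,jy) dm(x,y) for Borel B ⊆ Σ×Σ. Then for every m and every bounded continuous f : Σ → ℝ, ∫_{Σ×Σ} f∘π₁ d(Tm) = ∫_Σ (L_g f) d((π₁)_* m) and ∫_{Σ×Σ} f∘π₂ d(Tm) = ∫_Σ (L_h f) d((π₂)_* m). In particular, if (π₁)_* m = ν_g and (π₂)_* m = ν_h where ν_g is a g-measure for g and ν_h is a g-measure for h, then (π₁)_*(Tm) = ν_g and (π₂)_*(Tm) = ν_h. -/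
open MeasureTheory Filter Topology
open scoped ENNReal NNReal

variable {S : Type} [Countable S] [Infinite S]
  [TopologicalSpace S] [DiscreteTopology S]
  [MeasurableSpace S] [BorelSpace S]

/-!
For fixed `x, y`, `G(·,·,x,y)` is the maximal coupling of the probability vectors `(g(ix))ᵢ` and
`(h(jy))ⱼ`, so its row sums are `g(ix)` and its column sums are `h(jy)`. Summing out the other
coordinate, the first marginal of `Tm` is the first marginal of `m` pushed through the kernel
`x ↦ ∑ᵢ g(ix) δ_{ix}`, whose integral against `f` is `L_g f`; likewise for the second marginal.
A g-measure is, tested against bounded continuous functions, a fixed point of that kernel.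
-/

open BoundedContinuousFunction ProbabilityTheory

lemma tsum_ofReal_eq_of_hasSum {ι : Type*} {f : ι → ℝ} {a : ℝ} (hf0 : ∀ i, 0 ≤ f i)
    (hf : HasSum f a) : ∑' i, ENNReal.ofReal (f i) = ENNReal.ofReal a := by
  rw [← ENNReal.ofReal_tsum_of_nonneg hf0 hf.summable, hf.tsum_eq]

section MaximalCoupling

variable {ι : Type*} {a b : ι → ℝ}

/-- When `1 - ∑ min a b = 0` the off-diagonal entries are `0`, because `x / 0 = 0`. -/
noncomputable def maximalCoupling [DecidableEq ι] (a b : ι → ℝ) (i j : ι) : ℝ :=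
  if i = j then min (a i) (b i)
  else max (a i - min (a i) (b i)) 0 * max (b j - min (a j) (b j)) 0 /
    (1 - ∑' k, min (a k) (b k))

lemma maximalCoupling_swap [DecidableEq ι] (a b : ι → ℝ) (i j : ι) :
    maximalCoupling b a j i = maximalCoupling a b i j := by
  unfold maximalCoupling
  rcases eq_or_ne i j with rfl | hij
  · simp [min_comm]
  · simp only [if_neg hij, if_neg hij.symm, min_comm (b _), mul_comm]

lemma hasSum_sub_min (ha0 : 0 ≤ a) (hb0 : 0 ≤ b) (ha : HasSum a 1) :
    HasSum (fun k => a k - min (a k) (b k)) (1 - ∑' k, min (a k) (b k)) :=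
  ha.sub (Summable.of_nonneg_of_le (fun k => le_min (ha0 k) (hb0 k)) (fun _ => min_le_left _ _)
    ha.summable).hasSum

lemma maximalCoupling_nonneg [DecidableEq ι] (ha0 : 0 ≤ a) (hb0 : 0 ≤ b) (ha : HasSum a 1)
    (i j : ι) : 0 ≤ maximalCoupling a b i j := by
  unfold maximalCoupling
  split_ifs
  · exact le_min (ha0 i) (hb0 i)
  · exact div_nonneg (mul_nonneg (le_max_right _ _) (le_max_right _ _))
      ((hasSum_sub_min ha0 hb0 ha).nonneg fun k => sub_nonneg.2 (min_le_left _ _))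

lemma hasSum_maximalCoupling_row [DecidableEq ι] (ha0 : 0 ≤ a) (hb0 : 0 ≤ b) (ha : HasSum a 1)
    (hb : HasSum b 1) (i : ι) : HasSum (fun j => maximalCoupling a b i j) (a i) := by
  set Δ := 1 - ∑' k, min (a k) (b k)
  set d := fun k => a k - min (a k) (b k)
  set e := fun k => b k - min (a k) (b k)
  have hd : HasSum d Δ := hasSum_sub_min ha0 hb0 ha
  have he : HasSum e Δ := by simpa only [min_comm (b _)] using hasSum_sub_min hb0 ha0 hb
  have hd_cancel : d i * Δ / Δ = d i := by
    rcases eq_or_ne Δ 0 with hΔ | hΔ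
    · have hd0 := (hasSum_zero_iff_of_nonneg fun k => sub_nonneg.2 (min_le_left _ _)).1
        (hΔ ▸ hd)
      simp [hΔ, congrFun hd0 i]
    · exact mul_div_cancel_right₀ _ hΔ
  have hde : d i * e i = 0 := by
    rcases le_total (a i) (b i) with h | h <;> simp [d, e, h]
  have hoff : HasSum (fun j => d i * e j / Δ) (d i) := by
    simpa only [hd_cancel] using (he.mul_left (d i)).div_const Δ
  have hrow : (fun j => maximalCoupling a b i j) =
      Function.update (fun j => d i * e j / Δ) i (min (a i) (b i)) := by
    funext j
    rcases eq_or_ne j i with rfl | hji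
    · simp [maximalCoupling]
    · simp [maximalCoupling, hji, hji.symm, d, e, Δ]
  have hupdate := hoff.update i (min (a i) (b i))
  rwa [hde, zero_div, sub_zero, add_sub_cancel, ← hrow] at hupdate

lemma hasSum_maximalCoupling_col [DecidableEq ι] (ha0 : 0 ≤ a) (hb0 : 0 ≤ b) (ha : HasSum a 1)
    (hb : HasSum b 1) (j : ι) : HasSum (fun i => maximalCoupling a b i j) (b j) := by
  simpa only [maximalCoupling_swap] using hasSum_maximalCoupling_row hb0 ha0 hb ha j

end MaximalCoupling

section TransferKernel

variable {α : Type} [MeasurableSpace α] {g : (ℕ → α) → ℝ}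

lemma measurable_cons (i : α) : Measurable (cons i) := by
  refine measurable_pi_lambda _ fun n => ?_
  cases n with
  | zero => exact measurable_const
  | succ k => exact measurable_pi_apply k

variable [Countable α]

/-- The kernel dual to the transfer operator: `∫ f d(transferKernel g x) = L_g f x`. -/
noncomputable def transferKernel (g : (ℕ → α) → ℝ) (hg : Measurable g) :
    Kernel (ℕ → α) (ℕ → α) where
  toFun x := Measure.sum fun i => ENNReal.ofReal (g (cons i x)) • Measure.dirac (cons i x)
  measurable' := Measure.measurable_of_measurable_coe _ fun A hA => by
    simp only [Measure.sum_apply _ hA, Measure.smul_apply, Measure.dirac_apply' _ hA, smul_eq_mul]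
    exact Measurable.tsum fun i =>
      (ENNReal.measurable_ofReal.comp (hg.comp (measurable_cons i))).mul
        ((measurable_const.indicator hA).comp (measurable_cons i))

lemma transferKernel_apply (hg : Measurable g) (x : ℕ → α) {A : Set (ℕ → α)}
    (hA : MeasurableSet A) :
    transferKernel g hg x A =
      ∑' i, ENNReal.ofReal (g (cons i x)) * A.indicator (fun _ => 1) (cons i x) := by
  simp only [transferKernel, Kernel.coe_mk, Measure.sum_apply _ hA, Measure.smul_apply,
    Measure.dirac_apply' _ hA, smul_eq_mul]
  rfl

lemma isMarkovKernel_transferKernel (hg : Measurable g) (hg0 : 0 ≤ g)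
    (hg1 : ∀ x, HasSum (fun i => g (cons i x)) 1) : IsMarkovKernel (transferKernel g hg) :=
  ⟨fun x => ⟨by
    simp only [transferKernel_apply hg x MeasurableSet.univ, Set.indicator_univ, mul_one,
      tsum_ofReal_eq_of_hasSum (fun i => hg0 _) (hg1 x), ENNReal.ofReal_one]⟩⟩

variable [TopologicalSpace α] [DiscreteTopology α] [BorelSpace α]

lemma integral_transferKernel (hg : Measurable g) (hg0 : 0 ≤ g)
    (hg1 : ∀ x, HasSum (fun i => g (cons i x)) 1) (f : (ℕ → α) →ᵇ ℝ) (x : ℕ → α) :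
    ∫ z, f z ∂(transferKernel g hg x) = ∑' i, g (cons i x) * f (cons i x) := by
  have := isMarkovKernel_transferKernel hg hg0 hg1
  have hf : Integrable f (transferKernel g hg x) := f.integrable _
  simp only [transferKernel, Kernel.coe_mk] at hf ⊢
  rw [integral_sum_measure hf]
  refine tsum_congr fun i => ?_
  rw [integral_smul_measure, integral_dirac' _ _ f.continuous.stronglyMeasurable, smul_eq_mul,
    ENNReal.toReal_ofReal (hg0 _)]

lemma integral_comp_transferKernel (hg : Measurable g) (hg0 : 0 ≤ g)
    (hg1 : ∀ x, HasSum (fun i => g (cons i x)) 1) (μ : Measure (ℕ → α)) [IsFiniteMeasure μ]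
    (f : (ℕ → α) →ᵇ ℝ) :
    ∫ z, f z ∂(transferKernel g hg ∘ₘ μ) = ∫ x, ∑' i, g (cons i x) * f (cons i x) ∂μ := by
  have := isMarkovKernel_transferKernel hg hg0 hg1
  rw [Measure.comp_eq_comp_const_apply, Kernel.integral_comp (f.integrable _)]
  simp only [Kernel.const_apply, integral_transferKernel hg hg0 hg1]

lemma comp_transferKernel_of_isGMeasure (hg : Measurable g) (hg0 : 0 ≤ g)
    (hg1 : ∀ x, HasSum (fun i => g (cons i x)) 1) {ν : Measure (ℕ → α)} (hν : IsGMeasure g ν) :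
    transferKernel g hg ∘ₘ ν = ν := by
  have := hν.1
  have := isMarkovKernel_transferKernel hg hg0 hg1
  refine ext_of_forall_integral_eq_of_IsFiniteMeasure fun f => ?_
  rw [integral_comp_transferKernel hg hg0 hg1, hν.2.2]

end TransferKernel

section Marginals

variable {α : Type} [MeasurableSpace α] [Countable α] {g h : (ℕ → α) → ℝ}
  {G : α → α → (ℕ → α) → (ℕ → α) → ℝ} {m μ : Measure ((ℕ → α) × (ℕ → α))}

lemma map_fst_eq_comp_transferKernel (hg : Measurable g) (hG0 : ∀ i j x y, 0 ≤ G i j x y)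
    (hrow : ∀ i x y, HasSum (fun j => G i j x y) (g (cons i x)))
    (hμ : ∀ B, MeasurableSet B → μ B = ∫⁻ p, ∑' (i : α) (j : α),
      ENNReal.ofReal (G i j p.1 p.2) * B.indicator (fun _ => 1) (cons i p.1, cons j p.2) ∂m) :
    μ.map Prod.fst = transferKernel g hg ∘ₘ m.map Prod.fst := by
  ext A hA
  rw [Measure.map_apply measurable_fst hA, hμ _ (measurable_fst hA),
    Measure.bind_apply hA (Kernel.aemeasurable _),
    lintegral_map (Kernel.measurable_coe _ hA) measurable_fst]
  refine lintegral_congr fun p => ?_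
  rw [transferKernel_apply hg _ hA]
  refine tsum_congr fun i => ?_
  have hind (j : α) :
      (Prod.fst ⁻¹' A).indicator (fun _ => (1 : ℝ≥0∞)) (cons i p.1, cons j p.2) =
        A.indicator (fun _ => 1) (cons i p.1) := rfl
  simp only [hind]
  rw [ENNReal.tsum_mul_right, tsum_ofReal_eq_of_hasSum (hG0 i · p.1 p.2) (hrow i p.1 p.2)]

lemma map_snd_eq_comp_transferKernel (hh : Measurable h) (hG0 : ∀ i j x y, 0 ≤ G i j x y)
    (hcol : ∀ j x y, HasSum (fun i => G i j x y) (h (cons j y)))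
    (hμ : ∀ B, MeasurableSet B → μ B = ∫⁻ p, ∑' (i : α) (j : α),
      ENNReal.ofReal (G i j p.1 p.2) * B.indicator (fun _ => 1) (cons i p.1, cons j p.2) ∂m) :
    μ.map Prod.snd = transferKernel h hh ∘ₘ m.map Prod.snd := by
  ext A hA
  rw [Measure.map_apply measurable_snd hA, hμ _ (measurable_snd hA),
    Measure.bind_apply hA (Kernel.aemeasurable _),
    lintegral_map (Kernel.measurable_coe _ hA) measurable_snd]
  refine lintegral_congr fun p => ?_
  rw [transferKernel_apply hh _ hA, ENNReal.tsum_comm]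
  refine tsum_congr fun j => ?_
  have hind (i : α) :
      (Prod.snd ⁻¹' A).indicator (fun _ => (1 : ℝ≥0∞)) (cons i p.1, cons j p.2) =
        A.indicator (fun _ => 1) (cons j p.2) := rfl
  simp only [hind]
  rw [ENNReal.tsum_mul_right, tsum_ofReal_eq_of_hasSum (hG0 · j p.1 p.2) (hcol j p.1 p.2)]

end Marginals

/-- **Lemma (the coupling Markov operator preserves the marginals).**
Let `g, h` be g-functions on the full shift, `F(i,x,y) = min(g(ix),h(iy))`,
`Δ(x,y) = 1 - ∑_i F(i,x,y)`, and let `G` be the coupling kernel (`G(ix,iy) = F(i,x,y)`,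
`G(ix,jy) = (g(ix)-F(i,x,y))⁺(h(jy)-F(j,x,y))⁺/Δ(x,y)` for `i ≠ j` when `Δ(x,y) > 0`, and `0`
when `Δ(x,y) = 0`).  Let `T` be the Markov operator
`(Tm)(B) = ∫ ∑_{i,j} G(ix,jy) 1_B(ix,jy) dm(x,y)`.  Then for every Borel probability measure
`m` on `Σ×Σ` and every bounded continuous `f : Σ → ℝ`,
`∫ f∘π₁ d(Tm) = ∫ L_g f d((π₁)_* m)` and `∫ f∘π₂ d(Tm) = ∫ L_h f d((π₂)_* m)`; in particular,
if `(π₁)_* m = ν_g` and `(π₂)_* m = ν_h` for g-measures `ν_g` of `g` and `ν_h` of `h`, then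
`(π₁)_*(Tm) = ν_g` and `(π₂)_*(Tm) = ν_h`. -/
theorem coupling_operator_preserves_marginals
    (g h : (ℕ → S) → ℝ) (hg : IsGFunction g) (hh : IsGFunction h)
    (F : S → (ℕ → S) → (ℕ → S) → ℝ)
    (hF : ∀ i x y, F i x y = min (g (cons i x)) (h (cons i y)))
    (Δ : (ℕ → S) → (ℕ → S) → ℝ)
    (hΔ : ∀ x y, Δ x y = 1 - ∑' i : S, F i x y)
    (G : S → S → (ℕ → S) → (ℕ → S) → ℝ)
    (hGdiag : ∀ i x y, G i i x y = F i x y)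
    (hGoff : ∀ i j x y, i ≠ j →
      G i j x y = if Δ x y = 0 then 0 else
        max (g (cons i x) - F i x y) 0 * max (h (cons j y) - F j x y) 0 / Δ x y)
    (T : Measure ((ℕ → S) × (ℕ → S)) → Measure ((ℕ → S) × (ℕ → S)))
    (hT : ∀ (m : Measure ((ℕ → S) × (ℕ → S))) (B : Set ((ℕ → S) × (ℕ → S))),
      MeasurableSet B →
      T m B = ∫⁻ p, ∑' (i : S) (j : S), ENNReal.ofReal (G i j p.1 p.2) *
          B.indicator (fun _ => (1 : ℝ≥0∞)) (cons i p.1, cons j p.2) ∂m)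
    (m : Measure ((ℕ → S) × (ℕ → S))) (hm : IsProbabilityMeasure m) :
    (∀ f : BoundedContinuousFunction (ℕ → S) ℝ,
      (∫ p, f p.1 ∂(T m) = ∫ x, ∑' i : S, g (cons i x) * f (cons i x) ∂(m.map Prod.fst)) ∧
      (∫ p, f p.2 ∂(T m) = ∫ y, ∑' j : S, h (cons j y) * f (cons j y) ∂(m.map Prod.snd))) ∧
    (∀ νg νh : Measure (ℕ → S), IsGMeasure g νg → IsGMeasure h νh →
      m.map Prod.fst = νg → m.map Prod.snd = νh →
      (T m).map Prod.fst = νg ∧ (T m).map Prod.snd = νh) := by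
  classical
  have := hm
  have hG : G = fun i j x y =>
      maximalCoupling (fun k => g (cons k x)) (fun k => h (cons k y)) i j := by
    funext i j x y
    rcases eq_or_ne i j with rfl | hij
    · simp [maximalCoupling, hGdiag, hF]
    · rw [hGoff i j x y hij, ite_eq_right_iff.2 fun h0 => by rw [h0, div_zero]]
      simp [maximalCoupling, hij, hF, hΔ]
  subst hG
  have hg0 : 0 ≤ g := fun x => (hg.2.1 x).1.le
  have hh0 : 0 ≤ h := fun y => (hh.2.1 y).1.le
  have hgx0 (x : ℕ → S) : 0 ≤ fun k => g (cons k x) := fun _ => hg0 _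
  have hhy0 (y : ℕ → S) : 0 ≤ fun k => h (cons k y) := fun _ => hh0 _
  have hG0 (i j : S) (x y : ℕ → S) := maximalCoupling_nonneg (hgx0 x) (hhy0 y) (hg.2.2 x) i j
  have hfst := map_fst_eq_comp_transferKernel hg.1.measurable hG0 (fun i x y =>
    hasSum_maximalCoupling_row (hgx0 x) (hhy0 y) (hg.2.2 x) (hh.2.2 y) i) (hT m)
  have hsnd := map_snd_eq_comp_transferKernel hh.1.measurable hG0 (fun j x y =>
    hasSum_maximalCoupling_col (hgx0 x) (hhy0 y) (hg.2.2 x) (hh.2.2 y) j) (hT m)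
  refine ⟨fun f => ⟨?_, ?_⟩, fun νg νh hνg hνh h1 h2 => ⟨?_, ?_⟩⟩
  · rw [← integral_map measurable_fst.aemeasurable f.continuous.aestronglyMeasurable, hfst,
      integral_comp_transferKernel hg.1.measurable hg0 hg.2.2]
  · rw [← integral_map measurable_snd.aemeasurable f.continuous.aestronglyMeasurable, hsnd,
      integral_comp_transferKernel hh.1.measurable hh0 hh.2.2]
  · rw [hfst, h1, comp_transferKernel_of_isGMeasure hg.1.measurable hg0 hg.2.2 hνg]
  · rw [hsnd, h2, comp_transferKernel_of_isGMeasure hh.1.measurable hh0 hh.2.2 hνh]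
end
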